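/- Under the hypotheses of Roberts' time-reversing symmetry lemma — γ a T-periodic solution of z' = J∇Γ(z) with Γ C², S orthogonal, Γ∘S = Γ, SJ = −JS, γ(−s + T/N) = Sγ(s) for all s — let Y₀ be an invertible 2n×2n matrix and Y(s) the solution of ξ' = JD²Γ(γ(s))ξ with Y(0) = Y₀. Then Y(−s + T/N) = S Y(s) Y₀⁻¹ Sᵀ Y(T/N) for all s, and Y(T/N) = S Y₀ B⁻¹ Sᵀ B where B = Y(T/2N) (assumed invertible). -/

import Mathlib

open Matrix

noncomputable section

/-- The gradient of `f : (ι → ℝ) → ℝ` as the vector of partial derivatives. -/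
def grad {ι : Type*} [Fintype ι] [DecidableEq ι] (f : (ι → ℝ) → ℝ) (z : ι → ℝ) : ι → ℝ :=
  fun i => fderiv ℝ f z (Pi.single i 1)

/-- The Hessian `D²f` of `f : (ι → ℝ) → ℝ` as a matrix of second partial derivatives. -/
def hessM {ι : Type*} [Fintype ι] [DecidableEq ι] (f : (ι → ℝ) → ℝ) (z : ι → ℝ) :
    Matrix ι ι ℝ :=
  Matrix.of fun i j => fderiv ℝ (fun w => fderiv ℝ f w (Pi.single j 1)) z (Pi.single i 1)

/-- The standard `2n × 2n` symplectic matrix `[[0, I], [-I, 0]]`. -/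
def Jmat (n : ℕ) : Matrix (Fin n ⊕ Fin n) (Fin n ⊕ Fin n) ℝ :=
  Matrix.fromBlocks 0 1 (-1) 0

/-!
The linearized flow preserves the symplectic pairing: if `A(s) = J D²Γ(γ(s))` with `D²Γ`
symmetric, then `Aᵀ J + J A = 0`, so `Y(s)ᵀ J Z(s)` is constant for any two solutions `Y, Z`
of `X' = A X`. In particular `Y(s)ᵀ J Y(s) = Y₀ᵀ J Y₀` keeps every `Y(s)` invertible, and
comparing the two pairings gives `Z(s) = Y(s) Y₀⁻¹ Z(0)`. The symmetry makes
`Z(s) = Sᵀ Y(T/N - s)` such a second solution: differentiating `Γ ∘ S = Γ` twice gives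
`D²Γ(γ(s)) = Sᵀ D²Γ(γ(T/N - s)) S`, and `SJ = -JS` absorbs the sign from reversing time.
Evaluating at `s = T/2N`, where `T/N - s = s`, gives the factorization of `Y(T/N)`.
-/

open Filter Topology

theorem ContDiffAt.differentiableAt_fderiv {𝕜 E F : Type*} [NontriviallyNormedField 𝕜]
    [NormedAddCommGroup E] [NormedSpace 𝕜 E] [NormedAddCommGroup F] [NormedSpace 𝕜 F]
    {f : E → F} {x : E} (hf : ContDiffAt 𝕜 2 f x) : DifferentiableAt 𝕜 (fderiv 𝕜 f) x :=
  (hf.fderiv_right (m := 1) (by norm_num)).differentiableAt (by norm_num)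

theorem fderiv_fderiv_comp_clm_apply {𝕜 E F G : Type*} [NontriviallyNormedField 𝕜]
    [NormedAddCommGroup E] [NormedSpace 𝕜 E] [NormedAddCommGroup F] [NormedSpace 𝕜 F]
    [NormedAddCommGroup G] [NormedSpace 𝕜 G] (L : E →L[𝕜] F) {f : F → G} {x : E}
    (hf : ∀ᶠ y in 𝓝 (L x), DifferentiableAt 𝕜 f y)
    (hf' : DifferentiableAt 𝕜 (fderiv 𝕜 f) (L x)) (v w : E) :
    fderiv 𝕜 (fun y => fderiv 𝕜 (f ∘ L) y w) x v = fderiv 𝕜 (fderiv 𝕜 f) (L x) (L v) (L w) := by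
  have hloc : (fun y => fderiv 𝕜 (f ∘ L) y w) =ᶠ[𝓝 x] (fun u => fderiv 𝕜 f u (L w)) ∘ L := by
    filter_upwards [(L.continuous.tendsto x).eventually hf] with y hy
    rw [fderiv_comp y hy L.differentiableAt, L.fderiv]
    rfl
  rw [hloc.fderiv_eq, fderiv_comp x (hf'.clm_apply (differentiableAt_const _)) L.differentiableAt,
    L.fderiv, ContinuousLinearMap.comp_apply, fderiv_clm_apply hf' (differentiableAt_const _)]
  simp

section Hessian

variable {ι : Type*} [Fintype ι] [DecidableEq ι] {f g : (ι → ℝ) → ℝ} {z : ι → ℝ}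

theorem hessM_apply_of_differentiableAt (h : DifferentiableAt ℝ (fderiv ℝ f) z) (i j : ι) :
    hessM f z i j = fderiv ℝ (fderiv ℝ f) z (Pi.single i 1) (Pi.single j 1) := by
  rw [hessM, of_apply, fderiv_clm_apply h (differentiableAt_const _)]
  simp

theorem hessM_transpose_of_contDiffAt (hf : ContDiffAt ℝ 2 f z) : (hessM f z)ᵀ = hessM f z := by
  ext i j
  rw [transpose_apply, hessM_apply_of_differentiableAt hf.differentiableAt_fderiv,
    hessM_apply_of_differentiableAt hf.differentiableAt_fderiv]
  exact (hf.isSymmSndFDerivAt (by simp)).eq _ _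

theorem Filter.EventuallyEq.hessM_eq (h : f =ᶠ[𝓝 z] g) : hessM f z = hessM g z := by
  ext i j
  have hj : (fun w => fderiv ℝ f w (Pi.single j 1)) =ᶠ[𝓝 z]
      fun w => fderiv ℝ g w (Pi.single j 1) :=
    (h.fderiv (𝕜 := ℝ)).mono fun w hw => congrArg (fun φ => φ (Pi.single j 1)) hw
  simp only [hessM, of_apply, hj.fderiv_eq]

theorem hessM_eq_toMatrix₂' (h : DifferentiableAt ℝ (fderiv ℝ f) z) :
    hessM f z = LinearMap.toMatrix₂' ℝ (fderiv ℝ (fderiv ℝ f) z).toLinearMap₁₂ := by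
  ext i j
  rw [hessM_apply_of_differentiableAt h, LinearMap.toMatrix₂'_apply]
  rfl

theorem hessM_comp_mulVec (S : Matrix ι ι ℝ) (hf : ContDiffAt ℝ 2 f (S *ᵥ z)) :
    hessM (fun w => f (S *ᵥ w)) z = Sᵀ * hessM f (S *ᵥ z) * S := by
  set L : (ι → ℝ) →L[ℝ] (ι → ℝ) := (toLin' S).toContinuousLinearMap
  have hdiff : ∀ᶠ y in 𝓝 (L z), DifferentiableAt ℝ f y :=
    (hf.eventually (by simp)).mono fun y hy => hy.differentiableAt (by norm_num)
  have hcompl : Sᵀ * hessM f (S *ᵥ z) * S = LinearMap.toMatrix₂' ℝ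
      ((fderiv ℝ (fderiv ℝ f) (L z)).toLinearMap₁₂.compl₁₂ (toLin' S) (toLin' S)) := by
    rw [LinearMap.toMatrix₂'_compl₁₂, LinearMap.toMatrix'_toLin',
      hessM_eq_toMatrix₂' hf.differentiableAt_fderiv]
    rfl
  rw [hcompl]
  ext i j
  rw [LinearMap.toMatrix₂'_apply]
  exact fderiv_fderiv_comp_clm_apply L hdiff hf.differentiableAt_fderiv _ _

theorem hessM_eq_transpose_mul_hessM_mulVec_mul {Ω : Set (ι → ℝ)} {S : Matrix ι ι ℝ}
    (hΩ : IsOpen Ω) (hf : ContDiffOn ℝ 2 f Ω) (hinv : ∀ z ∈ Ω, f (S *ᵥ z) = f z) (hz : z ∈ Ω)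
    (hSz : S *ᵥ z ∈ Ω) : hessM f z = Sᵀ * hessM f (S *ᵥ z) * S := by
  have hloc : f =ᶠ[𝓝 z] fun w => f (S *ᵥ w) :=
    eventually_of_mem (hΩ.mem_nhds hz) fun w hw => (hinv w hw).symm
  rw [hloc.hessM_eq, hessM_comp_mulVec S (hf.contDiffAt (hΩ.mem_nhds hSz))]

end Hessian

section LinearODE

variable {m : Type*} [Fintype m]

theorem hasDerivAt_matrix_mul_apply {l n : Type*} {P : ℝ → Matrix l m ℝ} {Q : ℝ → Matrix m n ℝ}
    {P' : Matrix l m ℝ} {Q' : Matrix m n ℝ} {s : ℝ}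
    (hP : ∀ i j, HasDerivAt (fun t => P t i j) (P' i j) s)
    (hQ : ∀ i j, HasDerivAt (fun t => Q t i j) (Q' i j) s) (i : l) (j : n) :
    HasDerivAt (fun t => (P t * Q t) i j) ((P' * Q s + P s * Q') i j) s := by
  simp only [mul_apply, Matrix.add_apply, ← Finset.sum_add_distrib]
  exact HasDerivAt.fun_sum fun k _ => (hP i k).mul (hQ k j)

theorem transpose_mul_mul_eq_of_hasDerivAt {A : ℝ → Matrix m m ℝ} {M : Matrix m m ℝ}
    {Y Z : ℝ → Matrix m m ℝ} (hA : ∀ s, (A s)ᵀ * M + M * A s = 0)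
    (hY : ∀ s i j, HasDerivAt (fun t => Y t i j) ((A s * Y s) i j) s)
    (hZ : ∀ s i j, HasDerivAt (fun t => Z t i j) ((A s * Z s) i j) s) (s : ℝ) :
    (Y s)ᵀ * M * Z s = (Y 0)ᵀ * M * Z 0 := by
  have hderiv : ∀ u i j, HasDerivAt (fun t => ((Y t)ᵀ * M * Z t) i j) 0 u := by
    intro u i j
    have hYt : ∀ i j, HasDerivAt (fun t => (Y t)ᵀ i j) ((A u * Y u)ᵀ i j) u :=
      fun i j => hY u j i
    have hM : ∀ i j, HasDerivAt (fun _ : ℝ => M i j) ((0 : Matrix m m ℝ) i j) u :=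
      fun i j => hasDerivAt_const u (M i j)
    convert hasDerivAt_matrix_mul_apply (hasDerivAt_matrix_mul_apply hYt hM) (hZ u) i j using 1
    have : ((A u * Y u)ᵀ * M + (Y u)ᵀ * 0) * Z u + (Y u)ᵀ * M * (A u * Z u)
        = (Y u)ᵀ * ((A u)ᵀ * M + M * A u) * Z u := by
      simp only [transpose_mul, Matrix.mul_add, Matrix.add_mul, Matrix.mul_assoc, Matrix.mul_zero,
        add_zero]
    rw [this, hA, Matrix.mul_zero, Matrix.zero_mul, Matrix.zero_apply]
  ext i j
  exact is_const_of_deriv_eq_zero (fun t => (hderiv t i j).differentiableAt)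
    (fun t => (hderiv t i j).deriv) s 0

variable {R : Type*} [CommRing R] [DecidableEq m]

theorem isUnit_of_isUnit_transpose_mul_mul {M Y : Matrix m m R} (h : IsUnit (Yᵀ * M * Y)) :
    IsUnit Y := by
  rw [isUnit_iff_isUnit_det, det_mul] at h
  rw [isUnit_iff_isUnit_det]
  exact isUnit_of_mul_isUnit_right h

theorem eq_mul_inv_mul_of_transpose_mul_mul_eq {M Y Y₀ Z Z₀ : Matrix m m R} (hM : IsUnit M)
    (hY₀ : IsUnit Y₀) (hYY : Yᵀ * M * Y = Y₀ᵀ * M * Y₀) (hYZ : Yᵀ * M * Z = Y₀ᵀ * M * Z₀) :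
    Z = Y * Y₀⁻¹ * Z₀ := by
  have hK : IsUnit (Y₀ᵀ * M) := ((isUnit_transpose Y₀).mpr hY₀).mul hM
  have hY : IsUnit Y.det :=
    (isUnit_iff_isUnit_det Y).mp (isUnit_of_isUnit_transpose_mul_mul (hYY ▸ hK.mul hY₀))
  have hZ₀ : Z₀ = Y₀ * Y⁻¹ * Z := by
    refine hK.mul_left_cancel ?_
    calc Y₀ᵀ * M * Z₀ = Yᵀ * M * Y * (Y⁻¹ * Z) := by
          rw [← hYZ, Matrix.mul_assoc (Yᵀ * M) Y, mul_nonsing_inv_cancel_left Y Z hY]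
      _ = Y₀ᵀ * M * (Y₀ * Y⁻¹ * Z) := by rw [hYY]; simp only [Matrix.mul_assoc]
  rw [hZ₀, Matrix.mul_assoc, Matrix.mul_assoc,
    nonsing_inv_mul_cancel_left Y₀ _ ((isUnit_iff_isUnit_det Y₀).mp hY₀),
    mul_nonsing_inv_cancel_left Y Z hY]

end LinearODE

section Hamiltonian

theorem Jmat_transpose (n : ℕ) : (Jmat n)ᵀ = -Jmat n := by
  rw [Jmat, fromBlocks_transpose, fromBlocks_neg]
  simp

theorem Jmat_mul_Jmat (n : ℕ) : Jmat n * Jmat n = -1 := by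
  rw [Jmat, fromBlocks_multiply, ← fromBlocks_one, fromBlocks_neg]
  simp

theorem isUnit_Jmat (n : ℕ) : IsUnit (Jmat n) :=
  ⟨⟨Jmat n, -Jmat n, by rw [mul_neg, Jmat_mul_Jmat, neg_neg],
    by rw [neg_mul, Jmat_mul_Jmat, neg_neg]⟩, rfl⟩

theorem transpose_Jmat_mul_mul_Jmat_add {n : ℕ} {H : Matrix (Fin n ⊕ Fin n) (Fin n ⊕ Fin n) ℝ}
    (hH : Hᵀ = H) : (Jmat n * H)ᵀ * Jmat n + Jmat n * (Jmat n * H) = 0 := by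
  rw [transpose_mul, hH, Jmat_transpose, Matrix.mul_assoc, Matrix.neg_mul, Jmat_mul_Jmat,
    ← Matrix.mul_assoc, Jmat_mul_Jmat]
  simp

variable {n : ℕ} {H Y Z : ℝ → Matrix (Fin n ⊕ Fin n) (Fin n ⊕ Fin n) ℝ}

theorem isUnit_of_hasDerivAt_Jmat_mul (hH : ∀ s, (H s)ᵀ = H s)
    (hY : ∀ s i j, HasDerivAt (fun t => Y t i j) ((Jmat n * H s * Y s) i j) s)
    (hY0 : IsUnit (Y 0)) (s : ℝ) : IsUnit (Y s) := by
  refine isUnit_of_isUnit_transpose_mul_mul (M := Jmat n) ?_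
  rw [transpose_mul_mul_eq_of_hasDerivAt (fun s => transpose_Jmat_mul_mul_Jmat_add (hH s)) hY hY s]
  exact (((isUnit_transpose _).mpr hY0).mul (isUnit_Jmat n)).mul hY0

theorem eq_mul_inv_mul_of_hasDerivAt_Jmat_mul (hH : ∀ s, (H s)ᵀ = H s)
    (hY : ∀ s i j, HasDerivAt (fun t => Y t i j) ((Jmat n * H s * Y s) i j) s)
    (hZ : ∀ s i j, HasDerivAt (fun t => Z t i j) ((Jmat n * H s * Z s) i j) s)
    (hY0 : IsUnit (Y 0)) (s : ℝ) : Z s = Y s * (Y 0)⁻¹ * Z 0 :=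
  have hJH := fun s => transpose_Jmat_mul_mul_Jmat_add (hH s)
  eq_mul_inv_mul_of_transpose_mul_mul_eq (isUnit_Jmat n) hY0
    (transpose_mul_mul_eq_of_hasDerivAt hJH hY hY s)
    (transpose_mul_mul_eq_of_hasDerivAt hJH hY hZ s)

end Hamiltonian

theorem hasDerivAt_transpose_mul_comp_neg_add {m : Type*} [Fintype m] [DecidableEq m]
    {J S : Matrix m m ℝ} {H Y : ℝ → Matrix m m ℝ} {c : ℝ} (hS : Sᵀ * S = 1)
    (hSJ : S * J = -(J * S)) (hH : ∀ s, H s = Sᵀ * H (-s + c) * S)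
    (hY : ∀ s i j, HasDerivAt (fun t => Y t i j) ((J * H s * Y s) i j) s) (s : ℝ) (i j : m) :
    HasDerivAt (fun t => (Sᵀ * Y (-t + c)) i j) ((J * H s * (Sᵀ * Y (-s + c))) i j) s := by
  have hSS : S * Sᵀ = 1 := mul_eq_one_comm.mp hS
  have hJS : J * Sᵀ = -(Sᵀ * J) := by
    calc J * Sᵀ = Sᵀ * (S * J) * Sᵀ := by rw [← Matrix.mul_assoc, hS, Matrix.one_mul]
      _ = -(Sᵀ * J) := by
        rw [hSJ, Matrix.mul_neg, Matrix.neg_mul, Matrix.mul_assoc, Matrix.mul_assoc, hSS,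
          Matrix.mul_one]
  have hSt : ∀ i j, HasDerivAt (fun _ : ℝ => Sᵀ i j) ((0 : Matrix m m ℝ) i j) s :=
    fun i j => hasDerivAt_const s _
  have hYrev : ∀ i j, HasDerivAt (fun t => Y (-t + c) i j)
      ((-(J * H (-s + c) * Y (-s + c))) i j) s := fun i j => by
    simpa [Function.comp_def] using (hY (-s + c) i j).comp s ((hasDerivAt_neg s).add_const c)
  convert hasDerivAt_matrix_mul_apply hSt hYrev i j using 1
  refine congrFun (congrFun ?_ i) j
  calc J * H s * (Sᵀ * Y (-s + c)) = J * Sᵀ * H (-s + c) * (S * Sᵀ) * Y (-s + c) := by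
        rw [hH s]; simp only [Matrix.mul_assoc]
    _ = _ := by
        rw [hSS, hJS]; simp only [Matrix.mul_assoc, Matrix.mul_one, Matrix.neg_mul, Matrix.mul_neg,
          Matrix.zero_mul, zero_add]

theorem roberts_factorization_Y_general (n : ℕ)
    (Ω : Set ((Fin n ⊕ Fin n) → ℝ)) (hΩ : IsOpen Ω)
    (Γ : ((Fin n ⊕ Fin n) → ℝ) → ℝ) (hΓ : ContDiffOn ℝ 2 Γ Ω)
    (T : ℝ)
    (γ : ℝ → (Fin n ⊕ Fin n) → ℝ) (hmem : ∀ s, γ s ∈ Ω)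
    (S : Matrix (Fin n ⊕ Fin n) (Fin n ⊕ Fin n) ℝ)
    (hSorth : Sᵀ * S = 1)
    (N : ℕ)
    (hsymm : ∀ s : ℝ, γ (-s + T / (N : ℝ)) = S.mulVec (γ s))
    (hSinv : ∀ z ∈ Ω, Γ (S.mulVec z) = Γ z)
    (hSJ : S * Jmat n = -(Jmat n * S))
    (Y₀ : Matrix (Fin n ⊕ Fin n) (Fin n ⊕ Fin n) ℝ) (hY₀ : IsUnit Y₀)
    (Y : ℝ → Matrix (Fin n ⊕ Fin n) (Fin n ⊕ Fin n) ℝ)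
    (hY0 : Y 0 = Y₀)
    (hY : ∀ (s : ℝ) (i j : Fin n ⊕ Fin n),
      HasDerivAt (fun t => Y t i j) ((Jmat n * hessM Γ (γ s) * Y s) i j) s) :
    (∀ s : ℝ, Y (-s + T / (N : ℝ)) = S * Y s * Y₀⁻¹ * Sᵀ * Y (T / (N : ℝ))) ∧
    Y (T / (N : ℝ)) =
      S * Y₀ * (Y (T / (2 * (N : ℝ))))⁻¹ * Sᵀ * Y (T / (2 * (N : ℝ))) := by
  have hHsymm : ∀ s, (hessM Γ (γ s))ᵀ = hessM Γ (γ s) := fun s =>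
    hessM_transpose_of_contDiffAt (hΓ.contDiffAt (hΩ.mem_nhds (hmem s)))
  have hHrev : ∀ s, hessM Γ (γ s) = Sᵀ * hessM Γ (γ (-s + T / N)) * S := fun s => by
    rw [hsymm s]
    exact hessM_eq_transpose_mul_hessM_mulVec_mul hΩ hΓ hSinv (hmem s) (hsymm s ▸ hmem _)
  have hY0' : IsUnit (Y 0) := hY0 ▸ hY₀
  have hfactor : ∀ s, Sᵀ * Y (-s + T / N) = Y s * Y₀⁻¹ * (Sᵀ * Y (T / N)) := fun s => by
    simpa [hY0] using eq_mul_inv_mul_of_hasDerivAt_Jmat_mul hHsymm hY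
      (hasDerivAt_transpose_mul_comp_neg_add hSorth hSJ hHrev hY) hY0' s
  have hSS : S * Sᵀ = 1 := mul_eq_one_comm.mp hSorth
  refine ⟨fun s => ?_, ?_⟩
  · rw [← Matrix.one_mul (Y _), ← hSS, Matrix.mul_assoc, hfactor]
    simp only [Matrix.mul_assoc]
  · set B := Y (T / (2 * N))
    have hB : IsUnit B.det :=
      (isUnit_iff_isUnit_det B).mp (isUnit_of_hasDerivAt_Jmat_mul hHsymm hY hY0' _)
    have hBfactor : Sᵀ * B = B * Y₀⁻¹ * (Sᵀ * Y (T / N)) := by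
      rw [← hfactor, show -(T / (2 * N)) + T / N = T / (2 * N) by ring]
    calc Y (T / N) = S * (Y₀ * (B⁻¹ * (B * Y₀⁻¹ * (Sᵀ * Y (T / N))))) := by
          rw [Matrix.mul_assoc B, nonsing_inv_mul_cancel_left B _ hB,
            mul_nonsing_inv_cancel_left Y₀ _ ((isUnit_iff_isUnit_det Y₀).mp hY₀),
            ← Matrix.mul_assoc, hSS, Matrix.one_mul]
      _ = S * Y₀ * B⁻¹ * Sᵀ * B := by rw [← hBfactor]; simp only [Matrix.mul_assoc]

/-- Roberts' time-reversing symmetry lemma: if `γ` is a `T`-periodic solution of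
`z' = J∇Γ(z)` with time-reversing symmetry `S` (orthogonal, `Γ∘S = Γ`,
`SJ = −JS`, `γ(−s + T/N) = Sγ(s)`), and `X` is the fundamental matrix solution
of the linearization `ξ' = JD²Γ(γ(s))ξ` with invertible initial condition
`Y(0) = Y₀`, then `Y(−s + T/N) = S Y(s) Y₀⁻¹ Sᵀ Y(T/N)` for all `s`, and
`Y(T/N) = S Y₀ B⁻¹ Sᵀ B` where `B = Y(T/2N)` (assumed invertible). -/
theorem roberts_factorization_Y (n : ℕ)
    (Ω : Set ((Fin n ⊕ Fin n) → ℝ)) (hΩ : IsOpen Ω)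
    (Γ : ((Fin n ⊕ Fin n) → ℝ) → ℝ) (hΓ : ContDiffOn ℝ 2 Γ Ω)
    (T : ℝ) (hT : 0 < T)
    (γ : ℝ → (Fin n ⊕ Fin n) → ℝ) (hmem : ∀ s, γ s ∈ Ω)
    (hsol : ∀ s : ℝ, HasDerivAt γ ((Jmat n).mulVec (grad Γ (γ s))) s)
    (hper : Function.Periodic γ T)
    (S : Matrix (Fin n ⊕ Fin n) (Fin n ⊕ Fin n) ℝ)
    (hSorth : Sᵀ * S = 1)
    (N : ℕ) (hN : 0 < N)
    (hsymm : ∀ s : ℝ, γ (-s + T / (N : ℝ)) = S.mulVec (γ s))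
    (hSΩ : S.mulVec '' Ω = Ω)
    (hSinv : ∀ z ∈ Ω, Γ (S.mulVec z) = Γ z)
    (hSJ : S * Jmat n = -(Jmat n * S))
    (Y₀ : Matrix (Fin n ⊕ Fin n) (Fin n ⊕ Fin n) ℝ) (hY₀ : IsUnit Y₀)
    (Y : ℝ → Matrix (Fin n ⊕ Fin n) (Fin n ⊕ Fin n) ℝ)
    (hY0 : Y 0 = Y₀)
    (hY : ∀ (s : ℝ) (i j : Fin n ⊕ Fin n),
      HasDerivAt (fun t => Y t i j) ((Jmat n * hessM Γ (γ s) * Y s) i j) s)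
    (hB : IsUnit (Y (T / (2 * (N : ℝ))))) :
    (∀ s : ℝ, Y (-s + T / (N : ℝ)) = S * Y s * Y₀⁻¹ * Sᵀ * Y (T / (N : ℝ))) ∧
    Y (T / (N : ℝ)) =
      S * Y₀ * (Y (T / (2 * (N : ℝ))))⁻¹ * Sᵀ * Y (T / (2 * (N : ℝ))) :=
  roberts_factorization_Y_general n Ω hΩ Γ hΓ T γ hmem S hSorth N hsymm hSinv hSJ Y₀ hY₀ Y hY0 hY
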